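/- arXiv:2005.07568 — 6 statements merged into one kernel-verified Lean document; each statement's English description precedes it below -/
import Mathlib

section
/- In a directed correlation graph (cDG), for nodes α and β, the directed edge α→β is present if and only if β is NOT μ-separated from α given V∖{α}. -/
universe u

/-- A directed correlation graph (cDG): directed edges (loops allowed) and
blunt edges (symmetric, no loops). -/
structure CDG (V : Type u) where
  dir : V → V → Prop
  blunt : V → V → Prop
  blunt_symm : ∀ a b, blunt a b → blunt b a
  blunt_irrefl : ∀ a, ¬ blunt a a

namespace CDG

variable {V : Type u}

/-- `anc D a b` : `a` is an ancestor of `b` (directed path from `a` to `b`;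
every node is its own ancestor). -/
def anc (D : CDG V) (a b : V) : Prop := Relation.ReflTransGen D.dir a b

/-- `an(C)`: the set of ancestors of `C`. -/
def ancSet (D : CDG V) (C : Set V) : Set V := {a | ∃ c ∈ C, D.anc a c}

/-- An edge instance between `a` and `b`, with its orientation. -/
inductive Edge (D : CDG V) : V → V → Type u
  | fwd {a b : V} : D.dir a b → Edge D a b
  | bwd {a b : V} : D.dir b a → Edge D a b
  | bl  {a b : V} : D.blunt a b → Edge D a b

/-- The edge has a neck (head or stump) at its left endpoint. -/
def Edge.neckLeft {D : CDG V} {a b : V} : D.Edge a b → Prop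
  | .fwd _ => False
  | .bwd _ => True
  | .bl _ => True

/-- The edge has a neck (head or stump) at its right endpoint. -/
def Edge.neckRight {D : CDG V} {a b : V} : D.Edge a b → Prop
  | .fwd _ => True
  | .bwd _ => False
  | .bl _ => True

/-- The edge has a head (arrowhead) at its right endpoint. -/
def Edge.headRight {D : CDG V} {a b : V} : D.Edge a b → Prop
  | .fwd _ => True
  | _ => False

/-- The edge is a blunt edge. -/
def Edge.isBlunt {D : CDG V} {a b : V} : D.Edge a b → Prop
  | .bl _ => True
  | _ => False

/-- A walk from `a` to `b` in `D`. -/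
inductive Walk (D : CDG V) : V → V → Type u
  | nil (a : V) : Walk D a a
  | cons {a m c : V} : D.Edge a m → Walk D m c → Walk D a c

namespace Walk

variable {D : CDG V}

def length : ∀ {a b : V}, D.Walk a b → ℕ
  | _, _, .nil _ => 0
  | _, _, .cons _ w => w.length + 1

def support : ∀ {a b : V}, D.Walk a b → List V
  | a, _, .nil _ => [a]
  | a, _, .cons _ w => a :: w.support

/-- The list of nonendpoint (internal) node instances of a walk. -/
def internal : ∀ {a b : V}, D.Walk a b → List V
  | _, _, .nil _ => []
  | _, _, .cons _ (.nil _) => []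
  | _, _, .cons (m := m) _ w => m :: w.internal

/-- The final edge of the walk has a head at the terminal node. -/
def lastHead : ∀ {a b : V}, D.Walk a b → Prop
  | _, _, .nil _ => False
  | _, _, .cons e (.nil _) => e.headRight
  | _, _, .cons _ w => w.lastHead

/-- Every collider on the walk is in `an(C)` and no noncollider is in `C`. -/
def mOpen (C : Set V) : ∀ {a b : V}, D.Walk a b → Prop
  | _, _, .nil _ => True
  | _, _, .cons _ (.nil _) => True
  | _, _, .cons (m := m) e₁ (.cons e₂ w) =>
      ((e₁.neckRight ∧ e₂.neckLeft) → m ∈ D.ancSet C) ∧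
      (¬ (e₁.neckRight ∧ e₂.neckLeft) → m ∉ C) ∧
      mOpen C (Walk.cons e₂ w)

/-- Every nonendpoint node of the walk is a collider. -/
def allColliders : ∀ {a b : V}, D.Walk a b → Prop
  | _, _, .nil _ => True
  | _, _, .cons _ (.nil _) => True
  | _, _, .cons e₁ (.cons e₂ w) =>
      e₁.neckRight ∧ e₂.neckLeft ∧ allColliders (Walk.cons e₂ w)

/-- Every edge of the walk is blunt. -/
def allBlunt : ∀ {a b : V}, D.Walk a b → Prop
  | _, _, .nil _ => True
  | _, _, .cons e w => e.isBlunt ∧ w.allBlunt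

end Walk

/-- There is a μ-connecting walk from `a` to `b` given `C`. -/
def muConn (D : CDG V) (C : Set V) (a b : V) : Prop :=
  a ∉ C ∧ ∃ w : D.Walk a b, w.mOpen C ∧ w.lastHead

/-- `B` is μ-separated from `A` given `C`. -/
def muSep (D : CDG V) (A B C : Set V) : Prop :=
  ∀ a ∈ A, ∀ b ∈ B, ¬ D.muConn C a b

/-- The independence model of `D`: all μ-separation triples. -/
def indep (D : CDG V) : Set (Set V × Set V × Set V) :=
  {p | D.muSep p.1 p.2.1 p.2.2}

/-- A (nontrivial) collider path. -/
def IsColliderPath {D : CDG V} {a b : V} (w : D.Walk a b) : Prop :=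
  0 < w.length ∧ w.support.Nodup ∧ w.allColliders

/-- `a` and `b` are collider connected: some nontrivial walk between them has
every nonendpoint node a collider. -/
def colliderConn (D : CDG V) (a b : V) : Prop :=
  ∃ w : D.Walk a b, 0 < w.length ∧ w.allColliders

/-- A weak inducing path from `a` to `b`: a collider path whose nonendpoint
nodes are all ancestors of `a` or of `b`. -/
def WeakInducing (D : CDG V) (a b : V) : Prop :=
  ∃ w : D.Walk a b, IsColliderPath w ∧ ∀ m ∈ w.internal, D.anc m a ∨ D.anc m b

/-- A weak inducing path between `a` and `b` (in either direction). -/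
def WeakInducingBetween (D : CDG V) (a b : V) : Prop :=
  D.WeakInducing a b ∨ D.WeakInducing b a

end CDG

def firstNeck {V : Type u} {D : CDG V} : ∀ {a b : V}, D.Walk a b → Prop
  | _, _, .nil _ => False
  | _, _, .cons e _ => e.neckLeft

lemma key {V : Type} (D : CDG V) (α β : V) :
    ∀ {a : V} (w : D.Walk a β), w.mOpen (Set.univ \ {α}) → w.lastHead →
      (a = α ∨ firstNeck w) → D.dir α β := by
  intro a w
  induction w with
  | nil => intro _ h2 _; exact absurd h2 (by simp [CDG.Walk.lastHead])
  | cons e w ih =>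
    cases w with
    | nil =>
      intro _ h2 h3
      cases e with
      | fwd hd =>
        rcases h3 with rfl | hn
        · exact hd
        · exact absurd hn (by simp [firstNeck, CDG.Edge.neckLeft])
      | bwd _ => exact absurd h2 (by simp [CDG.Walk.lastHead, CDG.Edge.headRight])
      | bl _ => exact absurd h2 (by simp [CDG.Walk.lastHead, CDG.Edge.headRight])
    | cons e₂ w' =>
      intro h1 h2 _
      obtain ⟨hc, hnc, hrest⟩ := h1
      by_cases hcol : e.neckRight ∧ e₂.neckLeft
      · exact ih hrest h2 (Or.inr hcol.2)
      · have hm := hnc hcol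
        simp at hm
        exact ih hrest h2 (Or.inl hm)

/-- In a cDG, the directed edge α→β is present iff β is not
μ-separated from α given V∖{α}. -/
theorem stmt0 {V : Type} (D : CDG V) (α β : V) :
    D.dir α β ↔ ¬ D.muSep {α} {β} (Set.univ \ {α}) := by
  constructor
  · intro hd hsep
    exact hsep α (by simp) β (by simp)
      ⟨by simp, ⟨CDG.Walk.cons (CDG.Edge.fwd hd) (CDG.Walk.nil β), trivial, trivial⟩⟩
  · intro h
    by_contra hd
    apply h
    intro a ha b hb hconn
    obtain ⟨hnC, w, hO, hL⟩ := hconn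
    simp at ha hb
    subst ha; subst hb
    exact hd (key _ _ _ w hO hL (Or.inl rfl))
end

section
/- If two cDGs D₁ and D₂ on the same node set are Markov equivalent (have the same μ-separations), then they have exactly the same directed edges. -/
universe u

namespace CDG

variable {V : Type u} {D : CDG V}

lemma Walk.lastHead_pos {a b : V} (w : D.Walk a b) (h : w.lastHead) :
    0 < w.length := by
  cases w with
  | nil => exact absurd h (by simp [Walk.lastHead])
  | cons e w => simp [Walk.length]

/-- Key lemma: given `C = {y | y ≠ α}`, any μ-open walk ending with a head at
`β` forces a directed edge into `β`: from `α` if long, from the start if length 1. -/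
lemma key (α β : V) :
    ∀ {x : V} (w : D.Walk x β), w.mOpen {y | y ≠ α} → w.lastHead →
      (1 < w.length → D.dir α β) ∧ (w.length = 1 → D.dir x β) := by
  intro x w
  induction w with
  | nil => intro _ hlast; exact absurd hlast (by simp [Walk.lastHead])
  | @cons a m c e w ih =>
    cases w with
    | nil =>
      intro _ hlast
      constructor
      · intro hlen; exact absurd hlen (by simp [Walk.length])
      · intro _
        cases e with
        | fwd h => exact h
        | bwd h => exact absurd hlast (by simp [Walk.lastHead, Edge.headRight])
        | bl h => exact absurd hlast (by simp [Walk.lastHead, Edge.headRight])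
    | @cons m m' c' e₂ w' =>
      intro hopen hlast
      obtain ⟨h1, h2, h3⟩ := hopen
      have hlast' : (Walk.cons e₂ w').lastHead := hlast
      constructor
      · intro _
        cases w' with
        | nil =>
          -- last edge is e₂, with head at β
          cases e₂ with
          | fwd hd =>
            -- m is a noncollider (neckLeft of fwd is False), so m ∉ C, so m = α
            have hm : m ∉ {y | y ≠ α} := by
              apply h2
              rintro ⟨_, hnl⟩
              exact hnl
            have : m = α := by simpa using hm
            rw [this] at hd
            exact hd
          | bwd hd => exact absurd hlast' (by simp [Walk.lastHead, Edge.headRight])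
          | bl hd => exact absurd hlast' (by simp [Walk.lastHead, Edge.headRight])
        | cons e₃ w'' =>
          exact (ih h3 hlast').1 (by simp [Walk.length])
      · intro hlen
        exact absurd hlen (by simp [Walk.length])

/-- `D.dir α β` holds iff there is a μ-connecting walk from `α` to `β`
given the complement of `{α}`. -/
lemma dir_iff_muConn (D : CDG V) (α β : V) :
    D.dir α β ↔ D.muConn {y | y ≠ α} α β := by
  constructor
  · intro h
    refine ⟨by simp, Walk.cons (Edge.fwd h) (Walk.nil β), trivial, trivial⟩
  · rintro ⟨-, w, hopen, hlast⟩
    have hpos := w.lastHead_pos hlast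
    have hk := key α β w hopen hlast
    rcases Nat.lt_or_ge 1 w.length with hlt | hge
    · exact hk.1 hlt
    · exact hk.2 (le_antisymm hge hpos)

lemma dir_iff_not_muSep (D : CDG V) (α β : V) :
    D.dir α β ↔ ¬ D.muSep {α} {β} {y | y ≠ α} := by
  rw [dir_iff_muConn]
  constructor
  · intro h hsep
    exact hsep α rfl β rfl h
  · intro h
    by_contra hc
    exact h (by rintro a rfl b rfl; exact hc)

end CDG

/-- Markov equivalent cDGs have exactly the same directed edges. -/
theorem stmt1 {V : Type} (D₁ D₂ : CDG V) (h : D₁.indep = D₂.indep) :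
    ∀ α β : V, D₁.dir α β ↔ D₂.dir α β := by
  intro α β
  rw [CDG.dir_iff_not_muSep, CDG.dir_iff_not_muSep]
  have : ({α}, {β}, {y | y ≠ α}) ∈ D₁.indep ↔ ({α}, {β}, {y | y ≠ α}) ∈ D₂.indep := by
    rw [h]
  exact not_congr this
end

section
/- Let D be a cDG containing all loops and let α≠β. If there is no weak inducing path between α and β, then β is μ-separated from α given the set D(α,β) = {γ ∈ an({α,β}) : γ is collider connected to β} ∖ {α,β}. -/
universe u

/- If a walk from α to β is μ-connecting given D(α, β), every node on it is an ancestor of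
α or β: a collider lies in an(D(α, β)), and from a noncollider one can follow directed edges
along the walk until reaching an endpoint or a collider. Take such a walk of minimal length.
If it had a noncollider, the last one, m, would be collider connected to β through the rest
of the walk and lie outside D(α, β), so m ∈ {α, β}; cutting the walk at m gives a shorter
μ-connecting walk from α to β. Hence all its nodes are colliders, and removing cycles from it
leaves a weak inducing path from α to β. -/

namespace CDG

variable {V : Type u} {D : CDG V}

lemma mem_ancSet_of_dir {S : Set V} {x y : V} (h : D.dir x y) (hy : y ∈ D.ancSet S) :
    x ∈ D.ancSet S :=
  let ⟨c, hc, hyc⟩ := hy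
  ⟨c, hc, .head h hyc⟩

lemma subset_ancSet (S : Set V) : S ⊆ D.ancSet S := fun s hs => ⟨s, hs, .refl⟩

lemma ancSet_subset_of_subset_ancSet {S T : Set V} (h : S ⊆ D.ancSet T) :
    D.ancSet S ⊆ D.ancSet T := by
  rintro x ⟨s, hs, hxs⟩
  obtain ⟨t, ht, hst⟩ := h hs
  exact ⟨t, ht, hxs.trans hst⟩

lemma ancSet_mono {S T : Set V} (h : S ⊆ T) : D.ancSet S ⊆ D.ancSet T :=
  ancSet_subset_of_subset_ancSet (h.trans (subset_ancSet T))

lemma mem_ancSet_pair {a b x : V} : x ∈ D.ancSet {a, b} ↔ D.anc x a ∨ D.anc x b := by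
  simp [ancSet]

/-- The set `D(α, β)` of the paper. -/
def sepSet (D : CDG V) (α β : V) : Set V :=
  {γ | γ ∈ D.ancSet {α, β} ∧ D.colliderConn γ β} \ {α, β}

namespace Walk

def append : ∀ {a b c : V}, D.Walk a b → D.Walk b c → D.Walk a c
  | _, _, _, .nil _, w => w
  | _, _, _, .cons e u, w => .cons e (u.append w)

@[simp] lemma nil_append {a c : V} (w : D.Walk a c) : (nil a).append w = w := rfl

@[simp] lemma cons_append {a m b c : V} (e : D.Edge a m) (u : D.Walk m b) (w : D.Walk b c) :
    (cons e u).append w = .cons e (u.append w) := rfl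

lemma append_assoc {a b c d : V} (u : D.Walk a b) (v : D.Walk b c) (w : D.Walk c d) :
    (u.append v).append w = u.append (v.append w) := by
  induction u with
  | nil => rfl
  | cons e u ih => simp [ih]

@[simp] lemma length_append {a b c : V} (u : D.Walk a b) (w : D.Walk b c) :
    (u.append w).length = u.length + w.length := by
  induction u with
  | nil => simp [length]
  | cons e u ih => simp [length, ih]; omega

lemma length_pos_of_ne {a b : V} (w : D.Walk a b) (hne : a ≠ b) : 0 < w.length := by
  cases w with
  | nil => exact absurd rfl hne
  | cons => exact Nat.succ_pos _

lemma start_mem_support {a b : V} (w : D.Walk a b) : a ∈ w.support := by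
  cases w <;> simp [support]

lemma mem_support_append_iff {a b c x : V} (u : D.Walk a b) (w : D.Walk b c) :
    x ∈ (u.append w).support ↔ x ∈ u.support ∨ x ∈ w.support := by
  induction u with
  | nil => simpa [support] using fun h => h ▸ start_mem_support w
  | cons e u ih => simp [support, ih, or_assoc]

lemma internal_subset_support {a b x : V} (w : D.Walk a b) (hx : x ∈ w.internal) :
    x ∈ w.support := by
  induction w with
  | nil => simp [internal] at hx
  | cons e w ih =>
    cases w with
    | nil => simp [internal] at hx
    | cons f w =>
      simp only [internal, List.mem_cons] at hx
      rcases hx with rfl | hx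
      · simp [support]
      · exact List.mem_cons_of_mem _ (ih hx)

lemma exists_append_of_mem_support {a b x : V} (w : D.Walk a b) (hx : x ∈ w.support) :
    ∃ (u : D.Walk a x) (v : D.Walk x b), w = u.append v := by
  induction w with
  | nil => simp only [support, List.mem_singleton] at hx; subst hx; exact ⟨nil _, nil _, rfl⟩
  | cons e w ih =>
    simp only [support, List.mem_cons] at hx
    rcases hx with rfl | hx
    · exact ⟨nil _, cons e w, rfl⟩
    · obtain ⟨u, v, rfl⟩ := ih hx
      exact ⟨cons e u, v, rfl⟩

lemma exists_append_append_of_not_nodup {a b : V} (w : D.Walk a b) (hw : ¬ w.support.Nodup) :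
    ∃ (x : V) (u : D.Walk a x) (c : D.Walk x x) (v : D.Walk x b),
      w = u.append (c.append v) ∧ 0 < c.length := by
  induction w with
  | nil => simp [support] at hw
  | @cons a m b e w ih =>
    rw [support, List.nodup_cons, not_and_or, not_not] at hw
    rcases hw with ha | hw
    · obtain ⟨c, v, rfl⟩ := exists_append_of_mem_support w ha
      exact ⟨a, nil a, cons e c, v, rfl, Nat.succ_pos _⟩
    · obtain ⟨x, u, c, v, rfl, hc⟩ := ih hw
      exact ⟨x, cons e u, c, v, rfl, hc⟩

def firstNeck : ∀ {a b : V}, D.Walk a b → Prop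
  | _, _, .nil _ => True
  | _, _, .cons e _ => e.neckLeft

def lastNeck : ∀ {a b : V}, D.Walk a b → Prop
  | _, _, .nil _ => True
  | _, _, .cons e (.nil _) => e.neckRight
  | _, _, .cons _ w => w.lastNeck

lemma allColliders_of_cons {a m b : V} {e : D.Edge a m} {w : D.Walk m b}
    (h : (cons e w).allColliders) : w.allColliders := by
  cases w with
  | nil => trivial
  | cons => exact h.2.2

lemma allColliders_of_append_left {a b c : V} (u : D.Walk a b) (w : D.Walk b c)
    (h : (u.append w).allColliders) : u.allColliders := by
  induction u with
  | nil => trivial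
  | cons e u ih =>
    cases u with
    | nil => trivial
    | cons f u => exact ⟨h.1, h.2.1, ih _ h.2.2⟩

lemma allColliders_of_append_right {a b c : V} (u : D.Walk a b) (w : D.Walk b c)
    (h : (u.append w).allColliders) : w.allColliders := by
  induction u with
  | nil => exact h
  | cons e u ih => exact ih _ (allColliders_of_cons h)

lemma lastNeck_of_allColliders_append {a b c : V} (u : D.Walk a b) (w : D.Walk b c)
    (hw : 0 < w.length) (h : (u.append w).allColliders) : u.lastNeck := by
  induction u with
  | nil => trivial
  | cons e u ih =>
    cases u with
    | nil =>
      cases w with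
      | nil => simp [length] at hw
      | cons => exact h.1
    | cons f u => exact ih _ hw (allColliders_of_cons h)

lemma firstNeck_of_allColliders_append {a b c : V} (u : D.Walk a b) (w : D.Walk b c)
    (hu : 0 < u.length) (h : (u.append w).allColliders) : w.firstNeck := by
  induction u with
  | nil => simp [length] at hu
  | cons e u ih =>
    cases u with
    | nil =>
      cases w with
      | nil => trivial
      | cons => exact h.2.1
    | cons f u => exact ih _ (Nat.succ_pos _) (allColliders_of_cons h)

lemma allColliders_append {a b c : V} {u : D.Walk a b} {w : D.Walk b c}
    (hu : u.allColliders) (hw : w.allColliders) (hlast : u.lastNeck) (hfirst : w.firstNeck) :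
    (u.append w).allColliders := by
  induction u with
  | nil => exact hw
  | cons e u ih =>
    cases u with
    | nil =>
      cases w with
      | nil => trivial
      | cons => exact ⟨hlast, hfirst, hw⟩
    | cons f u => exact ⟨hu.1, hu.2.1, ih hu.2.2 hw hlast hfirst⟩

lemma allColliders_append_of_append_append {a x b : V} {u : D.Walk a x} {c : D.Walk x x}
    {v : D.Walk x b} (hc : 0 < c.length) (h : (u.append (c.append v)).allColliders) :
    (u.append v).allColliders :=
  have hcv := allColliders_of_append_right u _ h
  allColliders_append (allColliders_of_append_left u _ h) (allColliders_of_append_right c v hcv)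
    (lastNeck_of_allColliders_append u _ (by simp; omega) h)
    (firstNeck_of_allColliders_append c v hc hcv)

lemma exists_isColliderPath_of_allColliders {a b : V} (w : D.Walk a b) (hne : a ≠ b)
    (hw : w.allColliders) : ∃ p : D.Walk a b, IsColliderPath p ∧ p.support ⊆ w.support := by
  by_cases hnd : w.support.Nodup
  · exact ⟨w, ⟨w.length_pos_of_ne hne, hnd, hw⟩, fun _ => id⟩
  obtain ⟨x, u, c, v, hsplit, hc⟩ := exists_append_append_of_not_nodup w hnd
  have : u.length + v.length < w.length := by rw [hsplit]; simp; omega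
  obtain ⟨p, hp, hsub⟩ := exists_isColliderPath_of_allColliders (u.append v) hne
    (allColliders_append_of_append_append hc (hsplit ▸ hw))
  refine ⟨p, hp, fun y hy => ?_⟩
  have := hsub hy
  rw [hsplit]
  simp only [mem_support_append_iff] at this ⊢
  tauto
termination_by w.length

lemma mOpen_of_cons {C : Set V} {a m b : V} {e : D.Edge a m} {w : D.Walk m b}
    (h : (cons e w).mOpen C) : w.mOpen C := by
  cases w with
  | nil => trivial
  | cons => exact h.2.2

lemma mOpen_of_append_left {C : Set V} {a b c : V} (u : D.Walk a b) (w : D.Walk b c)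
    (h : (u.append w).mOpen C) : u.mOpen C := by
  induction u with
  | nil => trivial
  | cons e u ih =>
    cases u with
    | nil => trivial
    | cons f u => exact ⟨h.1, h.2.1, ih _ h.2.2⟩

lemma mOpen_of_append_right {C : Set V} {a b c : V} (u : D.Walk a b) (w : D.Walk b c)
    (h : (u.append w).mOpen C) : w.mOpen C := by
  induction u with
  | nil => exact h
  | cons e u ih => exact ih _ (mOpen_of_cons h)

lemma mem_ancSet_of_mOpen_cons_fwd {C : Set V} {x y b : V} (h : D.dir x y) (w : D.Walk y b)
    (hw : (cons (.fwd h) w).mOpen C) : x ∈ D.ancSet (insert b C) := by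
  induction w generalizing x with
  | nil => exact ⟨_, Set.mem_insert _ _, .single h⟩
  | cons e w ih =>
    cases e with
    | fwd h' => exact mem_ancSet_of_dir h (ih h' hw.2.2)
    | bwd h' => exact mem_ancSet_of_dir h (ancSet_mono (Set.subset_insert _ _) (hw.1 ⟨⟨⟩, ⟨⟩⟩))
    | bl h' => exact mem_ancSet_of_dir h (ancSet_mono (Set.subset_insert _ _) (hw.1 ⟨⟨⟩, ⟨⟩⟩))

lemma support_subset_ancSet_of_mOpen {C : Set V} {a b : V} (w : D.Walk a b) (hw : w.mOpen C) :
    ∀ x ∈ w.support, x ∈ D.ancSet (insert a (insert b C)) := by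
  induction w with
  | nil a => exact fun x hx => subset_ancSet _ (by simp_all [support])
  | @cons a y b e w ih =>
    have hy : y ∈ D.ancSet (insert a (insert b C)) := by
      cases w with
      | nil => exact subset_ancSet _ (by simp)
      | cons f w =>
        by_cases hcol : e.neckRight ∧ f.neckLeft
        · exact ancSet_mono (by intro; simp_all) (hw.1 hcol)
        cases e with
        | bwd h => exact mem_ancSet_of_dir h (subset_ancSet _ (Set.mem_insert _ _))
        | fwd | bl =>
          cases f with
          | fwd h => exact ancSet_mono (Set.subset_insert _ _) (mem_ancSet_of_mOpen_cons_fwd h _ hw.2.2)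
          | bwd | bl => exact absurd ⟨⟨⟩, ⟨⟩⟩ hcol
    intro x hx
    rcases List.mem_cons.mp hx with rfl | hx
    · exact subset_ancSet _ (Set.mem_insert _ _)
    · refine ancSet_subset_of_subset_ancSet ?_ (ih (mOpen_of_cons hw) x hx)
      exact Set.insert_subset hy fun z hz => subset_ancSet _ (Set.mem_insert_of_mem _ hz)

lemma exists_append_noncollider_of_not_allColliders {a b : V} (w : D.Walk a b)
    (hw : ¬ w.allColliders) :
    ∃ (x m c : V) (u : D.Walk a x) (e₁ : D.Edge x m) (e₂ : D.Edge m c) (v : D.Walk c b),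
      w = u.append (cons e₁ (cons e₂ v)) ∧ ¬ (e₁.neckRight ∧ e₂.neckLeft) ∧
        (cons e₂ v).allColliders := by
  induction w with
  | nil => exact absurd trivial hw
  | cons e w ih =>
    cases w with
    | nil => exact absurd trivial hw
    | cons f v =>
      by_cases hv : (cons f v).allColliders
      · exact ⟨_, _, _, nil _, e, f, v, rfl, fun hcol => hw ⟨hcol.1, hcol.2, hv⟩, hv⟩
      · obtain ⟨x, m, c, u, e₁, e₂, v', hsplit, hnc, hac⟩ := ih hv
        exact ⟨x, m, c, cons e u, e₁, e₂, v', by rw [cons_append, hsplit], hnc, hac⟩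

lemma weakInducing_of_allColliders {a b : V} (w : D.Walk a b) (hne : a ≠ b)
    (hw : w.allColliders) (hanc : ∀ x ∈ w.support, D.anc x a ∨ D.anc x b) :
    D.WeakInducing a b :=
  let ⟨p, hp, hsub⟩ := w.exists_isColliderPath_of_allColliders hne hw
  ⟨p, hp, fun x hx => hanc x (hsub (p.internal_subset_support hx))⟩

lemma weakInducing_of_mOpen_sepSet {α β : V} (hne : α ≠ β) (w : D.Walk α β)
    (hw : w.mOpen (D.sepSet α β)) : D.WeakInducing α β := by
  have hanc : ∀ x ∈ w.support, x ∈ D.ancSet {α, β} := by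
    refine fun x hx => ancSet_subset_of_subset_ancSet ?_ (w.support_subset_ancSet_of_mOpen hw x hx)
    exact Set.insert_subset (subset_ancSet _ (by simp))
      (Set.insert_subset (subset_ancSet _ (by simp)) fun γ hγ => hγ.1.1)
  by_cases hac : w.allColliders
  · exact w.weakInducing_of_allColliders hne hac fun x hx => mem_ancSet_pair.mp (hanc x hx)
  obtain ⟨x, m, c, u, e₁, e₂, v, hsplit, hnc, hcv⟩ :=
    w.exists_append_noncollider_of_not_allColliders hac
  have hlen : (cons e₂ v).length < w.length ∧ (u.append (cons e₁ (nil m))).length < w.length := by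
    rw [hsplit]; simp [length]; omega
  have hsuffix : (cons e₁ (cons e₂ v)).mOpen (D.sepSet α β) :=
    mOpen_of_append_right u _ (hsplit ▸ hw)
  -- `m` is in `an({α, β})` and collider connected to `β`, but as a noncollider not in `D(α, β)`.
  have hm : m = α ∨ m = β := by
    by_contra hm'
    refine hsuffix.2.1 hnc ⟨⟨hanc m ?_, ⟨cons e₂ v, Nat.succ_pos _, hcv⟩⟩, by simpa using hm'⟩
    rw [hsplit, mem_support_append_iff]
    simp [support]
  rcases hm with rfl | rfl
  · exact weakInducing_of_mOpen_sepSet hne (cons e₂ v) (mOpen_of_cons hsuffix)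
  · refine weakInducing_of_mOpen_sepSet hne (u.append (cons e₁ (nil _))) ?_
    refine mOpen_of_append_left _ (cons e₂ v) ?_
    rwa [append_assoc, cons_append, nil_append, ← hsplit]
termination_by w.length
decreasing_by all_goals omega

end Walk

end CDG

theorem stmt3_general {V : Type} (D : CDG V) (α β : V)
    (hne : α ≠ β) (h : ¬ D.WeakInducingBetween α β) :
    D.muSep {α} {β}
      ({γ | γ ∈ D.ancSet {α, β} ∧ D.colliderConn γ β} \ {α, β}) := by
  rintro a rfl b rfl ⟨-, w, hw, -⟩
  exact h (Or.inl (w.weakInducing_of_mOpen_sepSet hne hw))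

/-- If there is no weak inducing path between α and β (α≠β) in a
cDG containing all loops, then β is μ-separated from α given
D(α,β) = {γ ∈ an({α,β}) : γ collider connected to β} ∖ {α,β}. -/
theorem stmt3 {V : Type} (D : CDG V) (hloops : ∀ a, D.dir a a) (α β : V)
    (hne : α ≠ β) (h : ¬ D.WeakInducingBetween α β) :
    D.muSep {α} {β}
      ({γ | γ ∈ D.ancSet {α, β} ∧ D.colliderConn γ β} \ {α, β}) :=
  stmt3_general D α β hne h
end

section
/- Two directed graphs (DGs, containing only directed edges) on the same node set are Markov equivalent under μ-separation if and only if they are equal. -/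
universe u

section Aux
variable {V : Type u} {D : CDG V}

lemma aux_lastdir (D : CDG V) (a : V) : ∀ {x b : V} (w : D.Walk x b),
    1 < w.length → w.mOpen {y | y ≠ a} → w.lastHead → D.dir a b := by
  intro x b w
  induction w with
  | nil => intro h; simp [CDG.Walk.length] at h
  | cons e t ih =>
    cases t with
    | nil => intro h; simp [CDG.Walk.length] at h
    | cons e₂ t' =>
      intro _ hopen hlast
      obtain ⟨hc, hnc, hopen'⟩ := hopen
      cases t' with
      | nil =>
        cases e₂ with
        | fwd h =>
          have hm : ¬ _ ≠ a := hnc (by simp [CDG.Edge.neckLeft])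
          rw [not_not] at hm
          exact hm ▸ h
        | bwd h => simp [CDG.Walk.lastHead, CDG.Edge.headRight] at hlast
        | bl h => simp [CDG.Walk.lastHead, CDG.Edge.headRight] at hlast
      | cons e₃ t'' =>
        exact ih (by simp [CDG.Walk.length]) hopen' hlast

lemma dir_iff_muConn (D : CDG V) (a b : V) :
    D.dir a b ↔ D.muConn {y | y ≠ a} a b := by
  constructor
  · intro h
    refine ⟨by simp, CDG.Walk.cons (.fwd h) (.nil b), trivial, trivial⟩
  · rintro ⟨ha, w, hopen, hlast⟩
    cases w with
    | nil => exact hlast.elim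
    | cons e t =>
      cases t with
      | nil =>
        cases e with
        | fwd h => exact h
        | bwd h => exact hlast.elim
        | bl h => exact hlast.elim
      | cons e₂ t' =>
        exact aux_lastdir D a _ (by simp [CDG.Walk.length]) hopen hlast

lemma dir_iff_not_muSep (D : CDG V) (a b : V) :
    D.dir a b ↔ ¬ D.muSep {a} {b} {y | y ≠ a} := by
  rw [dir_iff_muConn]
  unfold CDG.muSep
  constructor
  · intro h hsep; exact hsep a rfl b rfl h
  · intro h
    by_contra hc
    exact h (by rintro a' rfl b' rfl; exact hc)

end Aux

/-- Two directed graphs (no blunt edges) are Markov equivalent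
under μ-separation iff they are equal. -/
theorem stmt4 {V : Type} (D₁ D₂ : CDG V)
    (h1 : ∀ a b, ¬ D₁.blunt a b) (h2 : ∀ a b, ¬ D₂.blunt a b) :
    D₁.indep = D₂.indep ↔ D₁ = D₂ := by
  constructor
  · intro h
    have hsep : ∀ A B C : Set V, D₁.muSep A B C ↔ D₂.muSep A B C := by
      intro A B C
      have := Set.ext_iff.mp h (A, B, C)
      exact this
    have hdir : ∀ a b, D₁.dir a b ↔ D₂.dir a b := by
      intro a b
      rw [dir_iff_not_muSep, dir_iff_not_muSep, hsep]
    cases D₁ with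
    | mk d₁ b₁ s₁ i₁ =>
      cases D₂ with
      | mk d₂ b₂ s₂ i₂ =>
        simp only [CDG.mk.injEq]
        constructor
        · funext a b; exact propext (hdir a b)
        · funext a b; exact propext ⟨fun hb => (h1 a b hb).elim, fun hb => (h2 a b hb).elim⟩
  · intro h; rw [h]
end

section
/- In a cDG, if ω is a collider path between α and β (with α,β∉C) such that every nonendpoint node of ω lies in an({α,β}∪C), then there exists a walk between α and β such that no noncollider on the walk is in C and every collider is in an(C). -/
universe u

namespace CDGAux

open CDG

variable {V : Type} {D : CDG V} {C : Set V}

/-- First edge has a neck at the left endpoint (False for the empty walk). -/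
def fNL : ∀ {a b : V}, D.Walk a b → Prop
  | _, _, .nil _ => False
  | _, _, .cons e _ => e.neckLeft

/-- First edge has a neck at the left endpoint (True for the empty walk). -/
def fNLok : ∀ {a b : V}, D.Walk a b → Prop
  | _, _, .nil _ => True
  | _, _, .cons e _ => e.neckLeft

lemma mOpen_cons {a m b : V} (e : D.Edge a m) (w : D.Walk m b) (hw : w.mOpen C)
    (h1 : e.neckRight ∧ fNL w → m ∈ D.ancSet C)
    (h2 : ¬(e.neckRight ∧ fNL w) → m ∉ C) : (CDG.Walk.cons e w).mOpen C := by
  cases w with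
  | nil => trivial
  | cons e₂ w₃ => exact ⟨h1, h2, hw⟩

lemma fwd_walk {m b : V} (hC : ∀ y, Relation.ReflTransGen D.dir m y → y ∉ C) :
    ∀ {a}, Relation.ReflTransGen D.dir a b → Relation.ReflTransGen D.dir m a →
      ∃ w : D.Walk a b, w.mOpen C ∧ ¬ fNL w := by
  intro a h
  induction h using Relation.ReflTransGen.head_induction_on with
  | refl => exact fun _ => ⟨.nil b, trivial, not_false⟩
  | head hdir htail ih =>
    intro hma
    obtain ⟨w', hw', hf⟩ := ih (hma.tail hdir)
    refine ⟨.cons (.fwd hdir) w', mOpen_cons _ _ hw' ?_ ?_, ?_⟩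
    · exact fun h => absurd h.2 hf
    · exact fun _ => hC _ (hma.tail hdir)
    · simp [fNL, CDG.Edge.neckLeft]

lemma bwd_walk {β m : V} (hC : ∀ y, Relation.ReflTransGen D.dir m y → y ∉ C)
    (wt : D.Walk m β) (hw : wt.mOpen C) :
    ∀ {a}, Relation.ReflTransGen D.dir m a → ∃ w : D.Walk a β, w.mOpen C := by
  intro a h
  induction h with
  | refl => exact ⟨wt, hw⟩
  | tail hmb hdir ih =>
    obtain ⟨w, hw'⟩ := ih
    exact ⟨.cons (.bwd hdir) w, mOpen_cons _ _ hw'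
      (fun h => h.1.elim) (fun _ => hC _ hmb)⟩

lemma main_aux {α : V} :
    ∀ {m β : V} (w : D.Walk m β), w.allColliders →
    (∀ x ∈ w.internal, x ∈ D.ancSet ({α, β} ∪ C)) →
    m ∈ D.ancSet ({α, β} ∪ C) → fNLok w → β ∉ C →
    (∃ w' : D.Walk α β, w'.mOpen C) ∨
    (m ∈ D.ancSet C ∧ ∃ w' : D.Walk m β, w'.mOpen C ∧ fNL w') ∨
    (m ∉ C ∧ ∃ w' : D.Walk m β, w'.mOpen C ∧ ¬ fNL w') := by
  intro m β w
  induction w with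
  | nil =>
    intro _ _ _ _ hβ
    exact Or.inr (Or.inr ⟨hβ, ⟨.nil _, trivial, not_false⟩⟩)
  | @cons m x β e w₂ ih =>
    intro hcol hint hm hfok hβ
    -- First, obtain an mOpen walk `w''` from `m` to `β` starting with edge `e`
    -- (unless the recursion already produced a full walk from `α`).
    have hxanS : x ∈ D.ancSet ({α, β} ∪ C) := by
      cases w₂ with
      | nil => exact ⟨_, by simp, Relation.ReflTransGen.refl⟩
      | cons e₂ w₃ =>
        exact hint x (by simp [CDG.Walk.internal])
    have hcol₂ : w₂.allColliders := by
      cases w₂ with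
      | nil => trivial
      | cons e₂ w₃ => exact hcol.2.2
    have hint₂ : ∀ y ∈ w₂.internal, y ∈ D.ancSet ({α, β} ∪ C) := by
      cases w₂ with
      | nil => intro y hy; simp [CDG.Walk.internal] at hy
      | cons e₂ w₃ =>
        intro y hy
        exact hint y (by simp [CDG.Walk.internal]; exact Or.inr hy)
    have hfok₂ : fNLok w₂ := by
      cases w₂ with
      | nil => trivial
      | cons e₂ w₃ => exact hcol.2.1
    rcases ih hcol₂ hint₂ hxanS hfok₂ hβ with hdone | ⟨hxC, w', hw', hf⟩ | ⟨hxC, w', hw', hf⟩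
    · exact Or.inl hdone
    · -- Keep case at x : x ∈ an(C), first edge of w' has a neck at x.
      have hw'' : (CDG.Walk.cons e w').mOpen C := by
        refine mOpen_cons _ _ hw' (fun _ => hxC) ?_
        intro hn
        cases w₂ with
        | nil =>
          -- here x = β
          exact hβ
        | cons e₂ w₃ =>
          exact absurd ⟨hcol.1, hf⟩ hn
      -- now split on the status of m
      by_cases hmC : m ∈ D.ancSet C
      · exact Or.inr (Or.inl ⟨hmC, ⟨.cons e w', hw'', hfok⟩⟩)
      · have hC : ∀ y, Relation.ReflTransGen D.dir m y → y ∉ C :=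
          fun y hy hyC => hmC ⟨y, hyC, hy⟩
        obtain ⟨c, hc, hanc⟩ := hm
        rcases hc with hc | hc
        · rcases hc with hc | hc
          · -- c = α : prepend reversed directed path, done
            subst hc
            exact Or.inl (bwd_walk hC _ hw'' hanc)
          · -- c = β : replace by directed path to β
            subst hc
            obtain ⟨wd, hwd, hfd⟩ := fwd_walk hC hanc Relation.ReflTransGen.refl
            exact Or.inr (Or.inr ⟨hC m Relation.ReflTransGen.refl, ⟨wd, hwd, hfd⟩⟩)
        · exact absurd (⟨c, hc, hanc⟩ : m ∈ D.ancSet C) hmC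
    · -- Free case at x : x ∉ C, first edge of w' has no neck at x.
      have hw'' : (CDG.Walk.cons e w').mOpen C :=
        mOpen_cons _ _ hw' (fun h => absurd h.2 hf) (fun _ => hxC)
      by_cases hmC : m ∈ D.ancSet C
      · exact Or.inr (Or.inl ⟨hmC, ⟨.cons e w', hw'', hfok⟩⟩)
      · have hC : ∀ y, Relation.ReflTransGen D.dir m y → y ∉ C :=
          fun y hy hyC => hmC ⟨y, hyC, hy⟩
        obtain ⟨c, hc, hanc⟩ := hm
        rcases hc with hc | hc
        · rcases hc with hc | hc
          · subst hc
            exact Or.inl (bwd_walk hC _ hw'' hanc)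
          · subst hc
            obtain ⟨wd, hwd, hfd⟩ := fwd_walk hC hanc Relation.ReflTransGen.refl
            exact Or.inr (Or.inr ⟨hC m Relation.ReflTransGen.refl, ⟨wd, hwd, hfd⟩⟩)
        · exact absurd (⟨c, hc, hanc⟩ : m ∈ D.ancSet C) hmC

end CDGAux

/-- If ω is a collider path between α and β (α,β ∉ C) with every
nonendpoint node in an({α,β}∪C), then there is a walk between α and β with no
noncollider in C and every collider in an(C). -/
theorem stmt5 {V : Type} (D : CDG V) (hloops : ∀ a, D.dir a a) {α β : V}
    (C : Set V) (hα : α ∉ C) (hβ : β ∉ C) (w : D.Walk α β)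
    (hcp : CDG.IsColliderPath w)
    (hint : ∀ m ∈ w.internal, m ∈ D.ancSet ({α, β} ∪ C)) :
    ∃ w' : D.Walk α β, w'.mOpen C := by
  obtain ⟨hlen, -, hcol⟩ := hcp
  cases w with
  | nil => exact absurd hlen (by simp [CDG.Walk.length])
  | @cons _ x _ e w₂ =>
    cases w₂ with
    | nil => exact ⟨.cons e (.nil _), trivial⟩
    | cons e₂ w₃ =>
      have hx : x ∈ D.ancSet ({α, β} ∪ C) := hint x (by simp [CDG.Walk.internal])
      have hint₂ : ∀ y ∈ (CDG.Walk.cons e₂ w₃).internal, y ∈ D.ancSet ({α, β} ∪ C) := by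
        intro y hy
        exact hint y (by simp [CDG.Walk.internal]; exact Or.inr hy)
      rcases CDGAux.main_aux (α := α) (CDG.Walk.cons e₂ w₃) hcol.2.2 hint₂ hx hcol.2.1 hβ with
        hdone | ⟨hxC, w', hw', hf⟩ | ⟨hxC, w', hw', hf⟩
      · exact hdone
      · exact ⟨.cons e w', CDGAux.mOpen_cons _ _ hw' (fun _ => hxC)
          (fun hn => absurd ⟨hcol.1, hf⟩ hn)⟩
      · exact ⟨.cons e w', CDGAux.mOpen_cons _ _ hw' (fun h => absurd h.2 hf)
          (fun _ => hxC)⟩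
end

section
/- Let D be a cDG containing every loop, S⊆V, and ρ a permutation of V fixing every node outside S. Suppose for all β,γ∈S that β→γ is an edge of D and pa(β)=pa(γ). Then the permutation graph P_ρ(D), which keeps all directed edges of D and has blunt edge ρ(α)⫞ρ(β) exactly when α⫞β in D, is Markov equivalent to D. -/
universe u

/-- The permutation graph `P_ρ(D)`: same directed edges; blunt edges are the
ρ-images of the blunt edges of `D` (ρ(a) ⫞ ρ(b) iff a ⫞ b in D). -/
def CDG.permGraph {V : Type} (D : CDG V) (ρ : Equiv.Perm V) : CDG V where
  dir := D.dir
  blunt a b := D.blunt (ρ.symm a) (ρ.symm b)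
  blunt_symm := fun a b h => D.blunt_symm _ _ h
  blunt_irrefl := fun _ h => D.blunt_irrefl _ h

section Aux

variable {V : Type u}

/-- `mOpenF D C w inc`: like `mOpen` but the first node of `w` is also
constrained, treating `inc` as "the previous edge has a neck at its right
endpoint". -/
def mOpenF (D : CDG V) (C : Set V) : ∀ {a b : V}, D.Walk a b → Prop → Prop
  | _, _, .nil _, _ => True
  | a, _, .cons e w, inc =>
      ((inc ∧ e.neckLeft) → a ∈ D.ancSet C) ∧ (¬ (inc ∧ e.neckLeft) → a ∉ C) ∧
        mOpenF D C w e.neckRight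

/-- `lastHF D w ph`: the last edge of `w` has a head at its right endpoint,
where `ph` is the default for the empty walk. -/
def lastHF (D : CDG V) : ∀ {a b : V}, D.Walk a b → Prop → Prop
  | _, _, .nil _, ph => ph
  | _, _, .cons e w, _ => lastHF D w e.headRight

lemma lastHF_of_false {D : CDG V} {a b : V} {w : D.Walk a b} {p : Prop}
    (h : lastHF D w False) : lastHF D w p := by
  cases w with
  | nil _ => exact h.elim
  | cons e u => exact h

lemma mOpenF_iff {D : CDG V} {C : Set V} {a b : V} {w : D.Walk a b} {p q : Prop}
    (hpq : p ↔ q) (h : mOpenF D C w p) : mOpenF D C w q := by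
  cases w with
  | nil _ => trivial
  | cons e u =>
    exact ⟨fun hh => h.1 ⟨hpq.mpr hh.1, hh.2⟩,
      fun hh => h.2.1 (fun hc => hh ⟨hpq.mp hc.1, hc.2⟩), h.2.2⟩

lemma mOpenF_false {D : CDG V} {C : Set V} {a b : V} {w : D.Walk a b} {p : Prop}
    (ha : a ∉ C) (h : mOpenF D C w p) : mOpenF D C w False := by
  cases w with
  | nil _ => trivial
  | cons e u => exact ⟨fun hh => hh.1.elim, fun _ => ha, h.2.2⟩

lemma mOpen_iff_mOpenF {D : CDG V} {C : Set V} :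
    ∀ {m b : V} (w : D.Walk m b) {a : V} (e : D.Edge a m),
      (CDG.Walk.cons e w).mOpen C ↔ mOpenF D C w e.neckRight := by
  intro m b w
  induction w with
  | nil _ => intro a e; simp [CDG.Walk.mOpen, mOpenF]
  | cons f u ih =>
    intro a e
    show (_ ∧ _ ∧ (CDG.Walk.cons f u).mOpen C) ↔ (_ ∧ _ ∧ mOpenF D C u f.neckRight)
    rw [ih f]

lemma lastHead_iff_lastHF {D : CDG V} :
    ∀ {m b : V} (w : D.Walk m b) {a : V} (e : D.Edge a m),
      (CDG.Walk.cons e w).lastHead ↔ lastHF D w e.headRight := by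
  intro m b w
  induction w with
  | nil _ => intro a e; rfl
  | cons f u ih =>
    intro a e
    show (CDG.Walk.cons f u).lastHead ↔ lastHF D u f.headRight
    exact ih f

lemma mem_ancSet_self {D : CDG V} {C : Set V} {c : V} (hc : c ∈ C) :
    c ∈ D.ancSet C := ⟨c, hc, Relation.ReflTransGen.refl⟩

lemma rhosymm_fix {S : Set V} {ρ : Equiv.Perm V} (hfix : ∀ v ∉ S, ρ v = v)
    {v : V} (hv : v ∉ S) : ρ.symm v = v :=
  (Equiv.symm_apply_eq ρ).mpr (hfix v hv).symm

lemma rhosymm_mem {S : Set V} {ρ : Equiv.Perm V} (hfix : ∀ v ∉ S, ρ v = v)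
    {v : V} (hv : v ∈ S) : ρ.symm v ∈ S := by
  by_contra h
  have h1 : ρ (ρ.symm v) = ρ.symm v := hfix _ h
  rw [Equiv.apply_symm_apply] at h1
  exact h (h1 ▸ hv)

lemma cdg_ext {D₁ D₂ : CDG V} (h1 : D₁.dir = D₂.dir) (h2 : D₁.blunt = D₂.blunt) :
    D₁ = D₂ := by
  cases D₁; cases D₂
  cases h1; cases h2
  rfl

end Aux

lemma permGraph_permGraph_symm {V : Type} (D : CDG V) (ρ : Equiv.Perm V) :
    (D.permGraph ρ).permGraph ρ.symm = D := by
  refine cdg_ext rfl ?_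
  funext a b
  show D.blunt (ρ.symm (ρ.symm.symm a)) (ρ.symm (ρ.symm.symm b)) = D.blunt a b
  simp

/-- Main translation lemma: a generalized μ-open walk in `D.permGraph ρ` can
be translated into one in `D`, possibly moving its start from `a` to `ρ⁻¹ a`. -/
lemma main_translate {V : Type} (D : CDG V) (S : Set V) (ρ : Equiv.Perm V)
    (hfix : ∀ v ∉ S, ρ v = v)
    (hS : ∀ β ∈ S, ∀ γ ∈ S, D.dir β γ ∧ (∀ δ, D.dir δ β ↔ D.dir δ γ))
    (C : Set V) :
    ∀ {a b : V} (w : (D.permGraph ρ).Walk a b) (inc ph : Prop),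
      mOpenF (D.permGraph ρ) C w inc → lastHF (D.permGraph ρ) w ph →
      ∃ s, ∃ w' : D.Walk s b, mOpenF D C w' inc ∧ lastHF D w' ph ∧
        (s = a ∨ (inc ∧ a ∈ S ∧ s = ρ.symm a)) ∧
        (inc → a ∈ C → a ∈ S → ρ.symm a ∈ C → 0 < w.length → s = ρ.symm a) := by
  intro a b w
  induction w with
  | nil a =>
    intro inc ph _ hlh
    exact ⟨a, .nil a, trivial, hlh, Or.inl rfl,
      fun _ _ _ _ hl => absurd hl (by simp [CDG.Walk.length])⟩
  | @cons a m b e w₀ ih =>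
    intro inc ph hmo hlh
    obtain ⟨H1, H2, H3⟩ := hmo
    cases e with
    | fwd h =>
      obtain ⟨s', w'', hmo', hlh', hdisj, -⟩ := ih _ _ H3 hlh
      have h' : D.dir a s' := by
        rcases hdisj with rfl | ⟨-, hmS, rfl⟩
        · exact h
        · exact ((hS m hmS (ρ.symm m) (rhosymm_mem hfix hmS)).2 a).mp h
      refine ⟨a, .cons (.fwd h') w'', ⟨fun hh => hh.2.elim, fun _ => H2 (fun hc => hc.2), hmo'⟩,
        hlh', Or.inl rfl, fun _ haC _ _ _ => absurd haC (H2 (fun hc => hc.2))⟩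
    | bwd h =>
      obtain ⟨s', w'', hmo', hlh', hdisj, -⟩ := ih _ _ H3 hlh
      obtain rfl : m = s' := (hdisj.elim id (fun hh => hh.1.elim)).symm
      by_cases hcase : inc ∧ a ∈ C ∧ a ∈ S ∧ ρ.symm a ∈ C
      · obtain ⟨hinc, haC, haS, hαC⟩ := hcase
        have h' : D.dir m (ρ.symm a) := ((hS a haS _ (rhosymm_mem hfix haS)).2 m).mp h
        exact ⟨ρ.symm a, .cons (.bwd h') w'',
          ⟨fun _ => mem_ancSet_self hαC, fun hn => absurd ⟨hinc, trivial⟩ hn, hmo'⟩,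
          hlh', Or.inr ⟨hinc, haS, rfl⟩, fun _ _ _ _ _ => rfl⟩
      · exact ⟨a, .cons (.bwd h) w'', ⟨H1, H2, hmo'⟩, hlh', Or.inl rfl,
          fun hinc haC haS hαC _ => absurd ⟨hinc, haC, haS, hαC⟩ hcase⟩
    | bl h =>
      have hD : D.blunt (ρ.symm a) (ρ.symm m) := h
      have hw₀len : 0 < w₀.length := by
        cases w₀ with
        | nil _ => exact hlh.elim
        | cons f u => simp [CDG.Walk.length]
      obtain ⟨s', w'', hmo', hlh', hdisj, hclause⟩ := ih _ _ H3 hlh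
      -- construct the exit segment: a walk from ρ.symm m to b
      have exit : ∃ wafter : D.Walk (ρ.symm m) b,
          mOpenF D C wafter True ∧ lastHF D wafter False := by
        by_cases hmS : m ∈ S
        · by_cases hμC : ρ.symm m ∈ C
          · by_cases hmC : m ∈ C
            · have hs' : s' = ρ.symm m := hclause trivial hmC hmS hμC hw₀len
              subst hs'
              exact ⟨w'', mOpenF_iff (Iff.rfl) hmo', hlh'⟩
            · rcases hdisj with hEq | ⟨-, -, rfl⟩
              · obtain rfl : m = s' := hEq.symm
                have k : D.dir m (ρ.symm m) := (hS m hmS _ (rhosymm_mem hfix hmS)).1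
                exact ⟨.cons (.bwd k) w'',
                  ⟨fun _ => mem_ancSet_self hμC, fun hn => absurd ⟨trivial, trivial⟩ hn,
                    mOpenF_false hmC hmo'⟩, hlh'⟩
              · exact ⟨w'', hmo', hlh'⟩
          · rcases hdisj with hEq | ⟨-, -, rfl⟩
            · obtain rfl : m = s' := hEq.symm
              have k : D.dir (ρ.symm m) m := (hS _ (rhosymm_mem hfix hmS) m hmS).1
              exact ⟨.cons (.fwd k) w'',
                ⟨fun hh => hh.2.elim, fun _ => hμC, hmo'⟩,
                (lastHF_of_false hlh' : lastHF D w'' True)⟩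
            · exact ⟨w'', hmo', hlh'⟩
        · have hμm : ρ.symm m = m := rhosymm_fix hfix hmS
          obtain rfl : m = s' := by
            rcases hdisj with hEq | ⟨-, hmS', -⟩
            · exact hEq.symm
            · exact absurd hmS' hmS
          rw [hμm]
          exact ⟨w'', hmo', hlh'⟩
      obtain ⟨wafter, hT, hA⟩ := exit
      set wB : D.Walk (ρ.symm a) b := .cons (.bl hD) wafter with hwB
      have fact1 : ρ.symm a ∈ D.ancSet C → mOpenF D C wB True :=
        fun hα => ⟨fun _ => hα, fun hn => absurd ⟨trivial, trivial⟩ hn, hT⟩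
      have fact2 : ρ.symm a ∉ C → mOpenF D C wB False :=
        fun hα => ⟨fun hh => hh.1.elim, fun _ => hα, hT⟩
      have hBlh : lastHF D wB ph := hA
      by_cases haS : a ∈ S
      · have hαS : ρ.symm a ∈ S := rhosymm_mem hfix haS
        by_cases hαC : ρ.symm a ∈ C
        · by_cases haC : a ∈ C
          · have hinc : inc := by
              by_contra hninc
              exact (H2 fun hc => hninc hc.1) haC
            exact ⟨ρ.symm a, wB,
              mOpenF_iff (iff_true_intro hinc).symm (fact1 (mem_ancSet_self hαC)),
              hBlh, Or.inr ⟨hinc, haS, rfl⟩, fun _ _ _ _ _ => rfl⟩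
          · have k : D.dir a (ρ.symm a) := (hS a haS _ hαS).1
            exact ⟨a, .cons (.fwd k) wB,
              ⟨fun hh => hh.2.elim, fun _ => haC, fact1 (mem_ancSet_self hαC)⟩,
              hA, Or.inl rfl, fun _ haC' _ _ _ => absurd haC' haC⟩
        · have k : D.dir (ρ.symm a) a := (hS _ hαS a haS).1
          exact ⟨a, .cons (.bwd k) wB, ⟨H1, H2, fact2 hαC⟩, hA, Or.inl rfl,
            fun _ _ _ hαC' _ => absurd hαC' hαC⟩
      · have hαa : ρ.symm a = a := rhosymm_fix hfix haS
        refine ⟨ρ.symm a, wB, ?_, hBlh, Or.inl hαa, fun _ _ _ _ _ => rfl⟩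
        by_cases hinc : inc
        · have ha1 : a ∈ D.ancSet C := H1 ⟨hinc, trivial⟩
          exact mOpenF_iff (iff_true_intro hinc).symm (fact1 (by rwa [hαa]))
        · have ha2 : a ∉ C := H2 (fun hc => hinc hc.1)
          exact mOpenF_iff (by simp [hinc]) (fact2 (by rwa [hαa]))

lemma muConn_perm {V : Type} (D : CDG V) (S : Set V) (ρ : Equiv.Perm V)
    (hfix : ∀ v ∉ S, ρ v = v)
    (hS : ∀ β ∈ S, ∀ γ ∈ S, D.dir β γ ∧ (∀ δ, D.dir δ β ↔ D.dir δ γ))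
    (C : Set V) (a b : V)
    (h : (D.permGraph ρ).muConn C a b) : D.muConn C a b := by
  obtain ⟨haC, w, hmo, hlh⟩ := h
  cases w with
  | nil _ => exact hlh.elim
  | cons e w₀ =>
    have h1 : mOpenF (D.permGraph ρ) C (CDG.Walk.cons e w₀) False :=
      ⟨fun hh => hh.1.elim, fun _ => haC, (mOpen_iff_mOpenF _ _).mp hmo⟩
    have h2 : lastHF (D.permGraph ρ) (CDG.Walk.cons e w₀) False :=
      (lastHead_iff_lastHF _ _).mp hlh
    obtain ⟨s, w', hmo', hlh', hdisj, -⟩ :=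
      main_translate D S ρ hfix hS C (.cons e w₀) False False h1 h2
    obtain rfl : s = a := hdisj.elim id (fun hh => hh.1.elim)
    cases w' with
    | nil _ => exact hlh'.elim
    | cons f u =>
      exact ⟨haC, _, (mOpen_iff_mOpenF _ _).mpr hmo'.2.2,
        (lastHead_iff_lastHF _ _).mpr hlh'⟩

/-- Permuting the blunt-edge endpoints within a set S whose
members are pairwise joined by directed edges and share parent sets gives a
Markov equivalent cDG. -/
theorem stmt8 {V : Type} (D : CDG V) (hloops : ∀ a, D.dir a a) (S : Set V)
    (ρ : Equiv.Perm V) (hfix : ∀ v ∉ S, ρ v = v)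
    (hS : ∀ β ∈ S, ∀ γ ∈ S, D.dir β γ ∧ (∀ δ, D.dir δ β ↔ D.dir δ γ)) :
    (D.permGraph ρ).indep = D.indep := by
  have fwd : ∀ C a b, (D.permGraph ρ).muConn C a b → D.muConn C a b :=
    fun C a b => muConn_perm D S ρ hfix hS C a b
  have bwd : ∀ C a b, D.muConn C a b → (D.permGraph ρ).muConn C a b := by
    intro C a b h
    have hfix' : ∀ v ∉ S, ρ.symm v = v := fun v hv => rhosymm_fix hfix hv
    have hS' : ∀ β ∈ S, ∀ γ ∈ S, (D.permGraph ρ).dir β γ ∧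
        (∀ δ, (D.permGraph ρ).dir δ β ↔ (D.permGraph ρ).dir δ γ) := hS
    have key := muConn_perm (D.permGraph ρ) S ρ.symm hfix' hS' C a b
    rw [permGraph_permGraph_symm] at key
    exact key h
  ext ⟨A, B, C⟩
  simp only [CDG.indep, CDG.muSep, Set.mem_setOf_eq]
  constructor
  · intro h a ha b hb hc
    exact h a ha b hb (bwd C a b hc)
  · intro h a ha b hb hc
    exact h a ha b hb (fwd C a b hc)
end
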